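/- Let K be an n×n symmetric positive semidefinite matrix and λ > 0. Define the variance V(K) = (σ²/n) · tr(K²(K + nλI)^{-2}). If K₁ ⪯ K₂ (Loewner order), then V(K₁) ≤ V(K₂), i.e., the variance is non-decreasing in K. -/

import Mathlib

/-!
Write `c = nλ` and `R = (K + c I)⁻¹`. The smoother `S = K R` equals `I - c R`, and
`K² R² = S²`, so `V(K) = (σ²/n) tr(S²)`. Matrix inversion is antitone on positive definite
matrices, hence `0 ⪯ S(K₁) ⪯ S(K₂)`. Finally `A ↦ tr(A²)` is monotone on positive semidefinite
matrices, since `tr(B²) - tr(A²) = tr((B + A)(B - A))` is the trace of a product of two positive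
semidefinite matrices.
-/

open Matrix

noncomputable def spec {m n : ℕ} (A : Matrix (Fin m) (Fin n) ℝ) : ℝ :=
  ‖LinearMap.toContinuousLinearMap (Matrix.toEuclideanLin A)‖

/-- Variance of the fixed-design ridge regression risk, with noise variance s = σ². -/
noncomputable def varFn {n : ℕ} (s lam : ℝ) (K : Matrix (Fin n) (Fin n) ℝ) : ℝ :=
  (s / n) *
    (K * K * (K + ((n : ℝ) * lam) • (1 : Matrix (Fin n) (Fin n) ℝ))⁻¹ *
      (K + ((n : ℝ) * lam) • (1 : Matrix (Fin n) (Fin n) ℝ))⁻¹).trace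

namespace Matrix

variable {ι : Type*} [DecidableEq ι]

theorem posDef_add_smul_one {K : Matrix ι ι ℝ} (hK : K.PosSemidef) {c : ℝ} (hc : 0 < c) :
    (K + c • 1).PosDef :=
  PosDef.posSemidef_add hK (PosDef.one.smul hc)

variable [Fintype ι]

/-- Both Schur complements of the block matrix `[[B, 1], [1, A⁻¹]]` are positive semidefinite
together: one is `B - A`, the other `A⁻¹ - B⁻¹`. -/
theorem PosDef.posSemidef_inv_sub_inv {𝕜 : Type*} [Field 𝕜] [PartialOrder 𝕜] [StarRing 𝕜]
    [StarOrderedRing 𝕜] {A B : Matrix ι ι 𝕜} (hA : A.PosDef) (hAB : (B - A).PosSemidef) :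
    (A⁻¹ - B⁻¹).PosSemidef := by
  have hB : B.PosDef := by simpa using hA.add_posSemidef hAB
  have := hA.isUnit.invertible
  have := hA.inv.isUnit.invertible
  have := hB.isUnit.invertible
  have hblock : (fromBlocks B 1 1ᴴ A⁻¹).PosSemidef := by
    rw [PosDef.fromBlocks₂₂ _ _ hA.inv]
    simpa [Matrix.inv_inv_of_invertible] using hAB
  simpa using (PosDef.fromBlocks₁₁ _ _ hB).mp hblock

theorem PosSemidef.trace_mul_nonneg {A B : Matrix ι ι ℝ} (hA : A.PosSemidef)
    (hB : B.PosSemidef) : 0 ≤ (A * B).trace := by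
  open scoped MatrixOrder in
  obtain ⟨C, rfl⟩ := CStarAlgebra.nonneg_iff_eq_star_mul_self.mp hB.nonneg
  rw [← Matrix.mul_assoc, trace_mul_cycle]
  exact (hA.mul_mul_conjTranspose_same C).trace_nonneg

theorem PosSemidef.trace_mul_self_le_trace_mul_self {A B : Matrix ι ι ℝ} (hA : A.PosSemidef)
    (hAB : (B - A).PosSemidef) : (A * A).trace ≤ (B * B).trace := by
  have hsum : (B + A).PosSemidef := by
    simpa [two_smul, add_assoc, add_comm] using (hA.smul (zero_le_two : (0 : ℝ) ≤ 2)).add hAB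
  have hdiff : (B * B).trace - (A * A).trace = ((B + A) * (B - A)).trace := by
    rw [add_mul, mul_sub, mul_sub, trace_add, trace_sub, trace_sub, trace_mul_comm A B]
    ring
  linarith [hsum.trace_mul_nonneg hAB]

section RidgeSmoother

variable {R : Type*} [CommRing R]

noncomputable def ridgeSmoother (c : R) (K : Matrix ι ι R) : Matrix ι ι R :=
  K * (K + c • 1)⁻¹

theorem ridgeSmoother_eq_one_sub {c : R} {K : Matrix ι ι R} (h : IsUnit (K + c • 1)) :
    ridgeSmoother c K = 1 - c • (K + c • 1)⁻¹ := by
  calc ridgeSmoother c K = (K + c • 1 - c • 1) * (K + c • 1)⁻¹ := by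
        rw [ridgeSmoother, add_sub_cancel_right]
    _ = 1 - c • (K + c • 1)⁻¹ := by
        rw [sub_mul, mul_nonsing_inv _ ((isUnit_iff_isUnit_det _).mp h), smul_mul_assoc,
          Matrix.one_mul]

theorem mul_mul_inv_mul_inv_eq_ridgeSmoother_mul_self {c : R} {K : Matrix ι ι R}
    (h : IsUnit (K + c • 1)) :
    K * K * (K + c • 1)⁻¹ * (K + c • 1)⁻¹ = ridgeSmoother c K * ridgeSmoother c K := by
  have hS := ridgeSmoother_eq_one_sub h
  set M := (K + c • 1)⁻¹
  calc K * K * M * M = K * ridgeSmoother c K * M := by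
        rw [ridgeSmoother, Matrix.mul_assoc K K]
    _ = K * M * ridgeSmoother c K := by
        -- `M` commutes with `ridgeSmoother c K = 1 - c • M`
        simp only [hS, mul_sub, sub_mul, Matrix.mul_one, mul_smul_comm,
          smul_mul_assoc, Matrix.mul_assoc]
    _ = ridgeSmoother c K * ridgeSmoother c K := rfl

end RidgeSmoother

theorem posSemidef_ridgeSmoother {K : Matrix ι ι ℝ} (hK : K.PosSemidef) {c : ℝ} (hc : 0 < c) :
    (ridgeSmoother c K).PosSemidef := by
  have hinv : (c • (c⁻¹ • 1 - (K + c • 1)⁻¹)).PosSemidef := by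
    refine PosSemidef.smul ?_ hc.le
    have hc1 : (c • (1 : Matrix ι ι ℝ))⁻¹ = c⁻¹ • 1 := by
      refine inv_eq_right_inv ?_
      rw [smul_mul_smul_comm, Matrix.one_mul, mul_inv_cancel₀ hc.ne', one_smul]
    rw [← hc1]
    exact (PosDef.one.smul hc).posSemidef_inv_sub_inv (by simpa using hK)
  rw [ridgeSmoother_eq_one_sub (posDef_add_smul_one hK hc).isUnit]
  rwa [smul_sub, smul_smul, mul_inv_cancel₀ hc.ne', one_smul] at hinv

theorem posSemidef_ridgeSmoother_sub {K₁ K₂ : Matrix ι ι ℝ} (hK₁ : K₁.PosSemidef)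
    (hK₂ : K₂.PosSemidef) (hle : (K₂ - K₁).PosSemidef) {c : ℝ} (hc : 0 < c) :
    (ridgeSmoother c K₂ - ridgeSmoother c K₁).PosSemidef := by
  have hM₁ := posDef_add_smul_one hK₁ hc
  have hinv := (hM₁.posSemidef_inv_sub_inv (B := K₂ + c • 1) (by simpa using hle)).smul hc.le
  rwa [ridgeSmoother_eq_one_sub hM₁.isUnit,
    ridgeSmoother_eq_one_sub (posDef_add_smul_one hK₂ hc).isUnit, sub_sub_sub_cancel_left,
    ← smul_sub]

end Matrix

theorem varFn_eq_trace_ridgeSmoother_mul_self {n : ℕ} (s lam : ℝ)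
    {K : Matrix (Fin n) (Fin n) ℝ} (h : IsUnit (K + ((n : ℝ) * lam) • 1)) :
    varFn s lam K =
      s / n * (ridgeSmoother ((n : ℝ) * lam) K * ridgeSmoother ((n : ℝ) * lam) K).trace := by
  rw [varFn, mul_mul_inv_mul_inv_eq_ridgeSmoother_mul_self h]

theorem stmt_9 {n : ℕ} (s lam : ℝ) (hs : 0 < s) (hlam : 0 < lam)
    (K₁ K₂ : Matrix (Fin n) (Fin n) ℝ)
    (hK₁ : K₁.PosSemidef) (hK₂ : K₂.PosSemidef)
    (hle : (K₂ - K₁).PosSemidef) :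
    varFn s lam K₁ ≤ varFn s lam K₂ := by
  rcases n.eq_zero_or_pos with rfl | hn
  · simp [varFn]
  have hc : 0 < (n : ℝ) * lam := by positivity
  rw [varFn_eq_trace_ridgeSmoother_mul_self s lam (posDef_add_smul_one hK₁ hc).isUnit,
    varFn_eq_trace_ridgeSmoother_mul_self s lam (posDef_add_smul_one hK₂ hc).isUnit]
  gcongr
  exact (posSemidef_ridgeSmoother hK₁ hc).trace_mul_self_le_trace_mul_self
    (posSemidef_ridgeSmoother_sub hK₁ hK₂ hle hc)
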